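/- If M →v N under weak call-by-value reduction, t is a canonical Φ-term, and ⟦t⟧ = M, then there exists a Φ-term u such that t rewrites in one step to u in Φ and ⟦u⟧ = N. -/

import Mathlib

/-- Untyped λ-terms over variables drawn from ℕ (a denumerable totally ordered set). -/
inductive Lam : Type
  | var : ℕ → Lam
  | lam : ℕ → Lam → Lam
  | app : Lam → Lam → Lam
deriving DecidableEq, Repr

namespace Lam

/-- Capture-permitting substitution M{N/x} (adequate for weak reduction of closed terms). -/
def subst : Lam → ℕ → Lam → Lam
  | var y, x, N => if y = x then N else var y
  | lam y M, x, N => if y = x then lam y M else lam y (subst M x N)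
  | app M₁ M₂, x, N => app (subst M₁ x N) (subst M₂ x N)

/-- Simultaneous substitution along a partial assignment of terms to variables. -/
def msubst : Lam → (ℕ → Option Lam) → Lam
  | var y, σ => (σ y).getD (var y)
  | lam y M, σ => lam y (msubst M (fun z => if z = y then none else σ z))
  | app M₁ M₂, σ => app (msubst M₁ σ) (msubst M₂ σ)

/-- The assignment sending each `xᵢ` to `tᵢ` (first match wins). -/
def substOf (xs : List ℕ) (ts : List Lam) : ℕ → Option Lam :=
  fun y => (xs.zip ts).lookup y

/-- Values: variables and abstractions. -/
def IsValue : Lam → Prop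
  | var _ => True
  | lam _ _ => True
  | app _ _ => False

/-- Weak call-by-value reduction. -/
inductive CbvStep : Lam → Lam → Prop
  | beta {x : ℕ} {M V : Lam} : IsValue V → CbvStep (app (lam x M) V) (subst M x V)
  | appL {M N L : Lam} : CbvStep M N → CbvStep (app M L) (app N L)
  | appR {M N L : Lam} : CbvStep M N → CbvStep (app L M) (app L N)

/-- A →v-normal form. -/
def CbvNormal (M : Lam) : Prop := ¬ ∃ N, CbvStep M N

/-- Free variables, as a finite set. -/
def fv : Lam → Finset ℕ
  | var x => {x}
  | lam x M => fv M \ {x}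
  | app M N => fv M ∪ fv N

/-- The sequence (without repetitions, in variable order) of free variables of `M`. -/
def fvList (M : Lam) : List ℕ := (fv M).sort (· ≤ ·)

def Closed (M : Lam) : Prop := fv M = ∅

/-- The size |M| of a λ-term. -/
def size : Lam → ℕ
  | var _ => 1
  | lam _ M => size M + 1
  | app M N => size M + size N + 1

end Lam

/-- `NSteps r n a b`: `a` reduces to `b` in exactly `n` `r`-steps. -/
def NSteps {α : Type*} (r : α → α → Prop) : ℕ → α → α → Prop
  | 0 => fun a b => a = b
  | n + 1 => fun a c => ∃ b, r a b ∧ NSteps r n b c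

/-- Terms of the constructor rewrite system Φ: variables, the binary function symbol
`app`, and for every λ-term `M` and variable `x` a constructor `c_{x,M}` (here `con x M`),
whose arity is the length of `FV(λx.M)`. -/
inductive PTerm : Type
  | var : ℕ → PTerm
  | app : PTerm → PTerm → PTerm
  | con : ℕ → Lam → List PTerm → PTerm

namespace PTerm

/-- Well-formed Φ-terms: every constructor is applied to as many arguments as its arity. -/
inductive WF : PTerm → Prop
  | var {x} : WF (var x)
  | app {u v} : WF u → WF v → WF (app u v)
  | con {x M ts} : ts.length = (Lam.fvList (Lam.lam x M)).length →
      (∀ t ∈ ts, WF t) → WF (con x M ts)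

/-- Constructor terms: built only from constructors. -/
inductive IsConTerm : PTerm → Prop
  | con {x M ts} : (∀ t ∈ ts, IsConTerm t) → IsConTerm (con x M ts)

/-- Canonical closed Φ-terms. -/
inductive Canonical : PTerm → Prop
  | con {t} : IsConTerm t → Canonical t
  | app {u v} : Canonical u → Canonical v → Canonical (app u v)

/-- Closed Φ-terms contain no variables. -/
inductive ClosedP : PTerm → Prop
  | app {u v} : ClosedP u → ClosedP v → ClosedP (app u v)
  | con {x M ts} : (∀ t ∈ ts, ClosedP t) → ClosedP (con x M ts)

/-- Substitution of Φ-terms for variables. -/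
def psubst (σ : ℕ → Option PTerm) : PTerm → PTerm
  | var y => (σ y).getD (var y)
  | app u v => app (psubst σ u) (psubst σ v)
  | con x M ts => con x M (ts.attach.map (fun t => psubst σ t.1))
decreasing_by
  all_goals simp_wf
  all_goals try have := List.sizeOf_lt_of_mem t.2
  all_goals omega

/-- The assignment sending each `xᵢ` to `tᵢ`. -/
def substOfP (xs : List ℕ) (ts : List PTerm) : ℕ → Option PTerm :=
  fun y => (xs.zip ts).lookup y

/-- Variables occurring in a Φ-term. -/
def pvars : PTerm → List ℕ
  | var y => [y]
  | app u v => pvars u ++ pvars v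
  | con _ _ ts => ts.attach.flatMap (fun t => pvars t.1)
decreasing_by
  all_goals simp_wf
  all_goals try have := List.sizeOf_lt_of_mem t.2
  all_goals omega

end PTerm

/-- The translation ⟨·⟩ from λ-terms to Φ-terms. -/
def transPhi : Lam → PTerm
  | .var x => .var x
  | .lam x M => .con x M ((Lam.fvList (.lam x M)).map .var)
  | .app M N => .app (transPhi M) (transPhi N)

/-- The readback ⟦·⟧ from Φ-terms to λ-terms. -/
def readback : PTerm → Lam
  | .var x => .var x
  | .app u v => .app (readback u) (readback v)
  | .con x M ts =>
      Lam.msubst (.lam x M)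
        (Lam.substOf (Lam.fvList (.lam x M)) (ts.attach.map (fun t => readback t.1)))
decreasing_by
  all_goals simp_wf
  all_goals try have := List.sizeOf_lt_of_mem t.2
  all_goals omega

/-- One-step rewriting in Φ: the rule app(c_{x,M}(x₁,…,xₙ), x) → ⟨M⟩ (matched variables
instantiated by constructor terms), closed under arbitrary contexts. -/
inductive PhiStep : PTerm → PTerm → Prop
  | root {x : ℕ} {M : Lam} {ts : List PTerm} {v : PTerm} :
      (∀ t ∈ ts, PTerm.IsConTerm t) → PTerm.IsConTerm v →
      ts.length = (Lam.fvList (.lam x M)).length →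
      PhiStep (.app (.con x M ts) v)
        (PTerm.psubst (PTerm.substOfP (Lam.fvList (.lam x M) ++ [x]) (ts ++ [v])) (transPhi M))
  | appL {u u' v} : PhiStep u u' → PhiStep (.app u v) (.app u' v)
  | appR {u v v'} : PhiStep v v' → PhiStep (.app u v) (.app u v')
  | conArg {x M ts₁ t t' ts₂} : PhiStep t t' →
      PhiStep (.con x M (ts₁ ++ t :: ts₂)) (.con x M (ts₁ ++ t' :: ts₂))

/-- Φ-normal forms. -/
def PhiNormal (t : PTerm) : Prop := ¬ ∃ u, PhiStep t u

/-!
Induction on the call-by-value step. Closed canonical terms contain no variables and the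
readback of a constructor is an abstraction, so a canonical preimage of an application is an
application of canonical terms, and the congruence steps lift componentwise. In a β-step
`(λx.B) V`, canonicity forces the function to be a constructor term `c_{x,M}(t⃗)` with
`B = M{⟦t⃗⟧/x⃗}`, and the value `V` to be the readback of a constructor term `v`; hence the
root rule applies, and its contractum `⟨M⟩{t⃗/x⃗, v/x}` reads back to `M{⟦t⃗⟧/x⃗}{⟦v⟧/x}`
because the `⟦tᵢ⟧` are closed, so that the capture-permitting substitution composes correctly.
-/

namespace List

theorem lookup_map_prodMap_id {α β γ : Type*} [BEq α] (f : β → γ) (l : List (α × β)) (k : α) :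
    (l.map (Prod.map id f)).lookup k = (l.lookup k).map f := by
  induction l with
  | nil => rfl
  | cons p l ih =>
    obtain ⟨a, b⟩ := p
    cases h : k == a <;> simp_all [lookup_cons]

theorem lookup_zip_map_right {α β γ : Type*} [BEq α] (f : β → γ) (xs : List α) (l : List β)
    (k : α) : (xs.zip (l.map f)).lookup k = ((xs.zip l).lookup k).map f := by
  rw [zip_map_right, lookup_map_prodMap_id]

theorem lookup_zip_map_self {α β : Type*} [BEq α] [LawfulBEq α] (f : α → β) {xs : List α}
    {k : α} (hk : k ∈ xs) : (xs.zip (xs.map f)).lookup k = some (f k) := by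
  rw [← map_prod_left_eq_zip, lookup_graph f hk]

theorem lookup_zip_eq_none {α β : Type*} [BEq α] [LawfulBEq α] {xs : List α} {k : α}
    (hk : k ∉ xs) (l : List β) : (xs.zip l).lookup k = none :=
  lookup_eq_none_iff.2 fun p hp => by
    simpa using fun h : k = p.1 => hk (h ▸ (of_mem_zip (a := p.1) (b := p.2) hp).1)

theorem mem_of_lookup_zip_eq_some {α β : Type*} [BEq α] [LawfulBEq α] {xs : List α} {l : List β}
    {k : α} {b : β} (h : (xs.zip l).lookup k = some b) : b ∈ l := by
  obtain ⟨l₁, l₂, hl, -⟩ := lookup_eq_some_iff.1 h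
  exact (of_mem_zip (hl ▸ mem_append_right l₁ mem_cons_self)).2

theorem exists_lookup_zip_eq_some {α β : Type*} [BEq α] [LawfulBEq α] {xs : List α} {l : List β}
    {k : α} (hk : k ∈ xs) (hl : xs.length ≤ l.length) : ∃ b, (xs.zip l).lookup k = some b := by
  rw [← map_fst_zip hl] at hk
  obtain ⟨p, hp, rfl⟩ := mem_map.1 hk
  exact Option.isSome_iff_exists.1 (lookup_isSome_iff.2 ⟨p, hp, beq_self_eq_true _⟩)

end List

namespace Lam

theorem mem_fvList {M : Lam} {y : ℕ} : y ∈ fvList M ↔ y ∈ fv M := by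
  simp [fvList]

theorem msubst_congr {M : Lam} {σ₁ σ₂ : ℕ → Option Lam}
    (h : ∀ y ∈ fv M, (σ₁ y).getD (var y) = (σ₂ y).getD (var y)) :
    msubst M σ₁ = msubst M σ₂ := by
  induction M generalizing σ₁ σ₂ with
  | var y => simpa [msubst] using h y (by simp [fv])
  | lam y M ih =>
    simp only [msubst, lam.injEq, true_and]
    refine ih fun z hz => ?_
    by_cases hzy : z = y
    · simp [hzy]
    · simpa [hzy] using h z (by simp [fv, hz, hzy])
  | app M₁ M₂ ih₁ ih₂ =>
    simp only [msubst, app.injEq]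
    exact ⟨ih₁ fun y hy => h y (by simp [fv, hy]), ih₂ fun y hy => h y (by simp [fv, hy])⟩

theorem fv_msubst_subset {M : Lam} {σ : ℕ → Option Lam} {S : Finset ℕ}
    (h : ∀ y ∈ fv M, fv ((σ y).getD (var y)) ⊆ S) : fv (msubst M σ) ⊆ S := by
  induction M generalizing σ S with
  | var y => exact h y (by simp [fv])
  | lam y M ih =>
    have hbody : fv (msubst M fun z => if z = y then none else σ z) ⊆ insert y S := by
      refine ih fun z hz => ?_
      by_cases hzy : z = y
      · simp [hzy, fv]
      · simpa [hzy] using (h z (by simp [fv, hz, hzy])).trans (Finset.subset_insert y S)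
    intro z hz
    simp only [msubst, fv, Finset.mem_sdiff, Finset.mem_singleton] at hz
    exact (Finset.mem_insert.1 (hbody hz.1)).resolve_left hz.2
  | app M₁ M₂ ih₁ ih₂ =>
    exact Finset.union_subset (ih₁ fun y hy => h y (by simp [fv, hy]))
      (ih₂ fun y hy => h y (by simp [fv, hy]))

theorem subst_of_notMem_fv {M : Lam} {x : ℕ} (V : Lam) (h : x ∉ fv M) : subst M x V = M := by
  induction M with
  | var y =>
    have hyx : y ≠ x := by simpa [fv, eq_comm] using h
    simp [subst, hyx]
  | lam y M ih =>
    by_cases hyx : y = x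
    · simp [subst, hyx]
    · simp [subst, hyx, ih fun hx => h (by simp [fv, hx, Ne.symm hyx])]
  | app M₁ M₂ ih₁ ih₂ =>
    simp [subst, ih₁ fun hx => h (by simp [fv, hx]), ih₂ fun hx => h (by simp [fv, hx])]

theorem subst_msubst {M : Lam} {σ : ℕ → Option Lam} {x : ℕ} (V : Lam) (hx : σ x = none)
    (h : ∀ y ∈ fv M, y ≠ x → x ∉ fv ((σ y).getD (var y))) :
    subst (msubst M σ) x V = msubst M fun y => if y = x then some V else σ y := by
  induction M generalizing σ with
  | var y =>
    by_cases hyx : y = x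
    · subst hyx
      simp [msubst, hx, subst]
    · simpa [msubst, hyx] using subst_of_notMem_fv V (h y (by simp [fv]) hyx)
  | lam y M ih =>
    by_cases hyx : y = x
    · subst hyx
      simp only [msubst, subst, if_true, lam.injEq, true_and]
      refine msubst_congr fun z _ => ?_
      by_cases hzy : z = y <;> simp [hzy]
    · simp only [msubst, subst, if_neg hyx, lam.injEq, true_and]
      rw [ih (by simp [Ne.symm hyx, hx]) fun z hz hzx => ?_]
      · congr 1
        funext z
        by_cases hzy : z = y <;> by_cases hzx : z = x <;> simp_all
      · by_cases hzy : z = y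
        · simpa [hzy, fv] using Ne.symm hyx
        · simpa [hzy] using h z (by simp [fv, hz, hzy]) hzx
  | app M₁ M₂ ih₁ ih₂ =>
    simp only [msubst, subst, app.injEq]
    exact ⟨ih₁ hx fun y hy => h y (by simp [fv, hy]), ih₂ hx fun y hy => h y (by simp [fv, hy])⟩

end Lam

open Lam PTerm

def closureEnv (x : ℕ) (M : Lam) (ts : List PTerm) : ℕ → Option Lam :=
  fun z => if z = x then none else substOf (fvList (lam x M)) (ts.map readback) z

theorem readback_con (x : ℕ) (M : Lam) (ts : List PTerm) :
    readback (con x M ts) = lam x (msubst M (closureEnv x M ts)) := by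
  simp only [readback, msubst, List.map_subtype, List.unattach_attach]
  rfl

theorem psubst_con (σ : ℕ → Option PTerm) (x : ℕ) (M : Lam) (ts : List PTerm) :
    psubst σ (con x M ts) = con x M (ts.map (psubst σ)) := by
  simp [psubst]

theorem readback_psubst_transPhi (M : Lam) (ρ : ℕ → Option PTerm) :
    readback (psubst ρ (transPhi M)) = msubst M fun y => (ρ y).map readback := by
  induction M generalizing ρ with
  | var y => cases h : ρ y <;> simp [transPhi, psubst, msubst, h, readback]
  | lam x P _ =>
    rw [transPhi, psubst_con, readback_con, msubst]
    congr 1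
    refine msubst_congr fun y hy => ?_
    by_cases hyx : y = x
    · simp [closureEnv, hyx]
    have hy' : y ∈ fvList (lam x P) := mem_fvList.2 (by simp [fv, hy, hyx])
    simp only [closureEnv, hyx, if_false, substOf, List.map_map]
    rw [List.lookup_zip_map_self _ hy']
    cases h : ρ y <;> simp [psubst, h, readback]
  | app M₁ M₂ ih₁ ih₂ => simp only [transPhi, psubst, readback, msubst, ih₁, ih₂]

theorem fv_readback_eq_empty {t : PTerm} (hwf : WF t) (hcl : ClosedP t) :
    fv (readback t) = ∅ := by
  induction hwf with
  | var => cases hcl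
  | app _ _ ihu ihv =>
    cases hcl with
    | app hclu hclv => simp [readback, fv, ihu hclu, ihv hclv]
  | @con x M ts hlen _ ih =>
    cases hcl with | con hcl =>
    rw [readback, ← Finset.subset_empty]
    refine fv_msubst_subset fun y hy => ?_
    obtain ⟨N, hN⟩ :=
      List.exists_lookup_zip_eq_some (l := ts.map readback) (mem_fvList.2 hy) (by simp [hlen])
    obtain ⟨s, hs, rfl⟩ := List.mem_map.1 (List.mem_of_lookup_zip_eq_some hN)
    simp [substOf, hN, ih s hs (hcl s hs)]

theorem readback_contractum {x : ℕ} {M : Lam} {ts : List PTerm} (v : PTerm)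
    (hlen : ts.length = (fvList (lam x M)).length) (hts : ∀ s ∈ ts, fv (readback s) = ∅) :
    readback (psubst (substOfP (fvList (lam x M) ++ [x]) (ts ++ [v])) (transPhi M)) =
      subst (msubst M (closureEnv x M ts)) x (readback v) := by
  rw [readback_psubst_transPhi, subst_msubst _ (by simp [closureEnv]) fun y _ hyx => ?_]
  · congr 1
    funext y
    have hx : x ∉ fvList (lam x M) := by simp [mem_fvList, fv]
    by_cases hyx : y = x
    · simp [hyx, substOfP, List.zip_append hlen.symm, List.lookup_append,
        List.lookup_zip_eq_none hx]
    · simp [hyx, closureEnv, substOfP, substOf, List.zip_append hlen.symm, List.lookup_append,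
        List.lookup_zip_map_right, List.lookup_cons, beq_eq_false_iff_ne.2 hyx]
  · simp only [closureEnv, hyx, if_false, substOf]
    cases h : ((fvList (lam x M)).zip (ts.map readback)).lookup y with
    | none => simpa [fv] using Ne.symm hyx
    | some N =>
      obtain ⟨s, hs, rfl⟩ := List.mem_map.1 (List.mem_of_lookup_zip_eq_some h)
      simp [hts s hs]

namespace PTerm

theorem Canonical.app_iff {u v : PTerm} : Canonical (.app u v) ↔ Canonical u ∧ Canonical v :=
  ⟨fun | .con h => nomatch h | .app hu hv => ⟨hu, hv⟩, fun ⟨hu, hv⟩ => .app hu hv⟩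

theorem IsConTerm.of_canonical_of_isValue {v : PTerm} (hcan : Canonical v)
    (hv : IsValue (readback v)) : IsConTerm v := by
  cases hcan with
  | con h => exact h
  | app => simp [readback, IsValue] at hv

theorem eq_app_of_readback_eq_app {t : PTerm} {M N : Lam} (hcl : ClosedP t)
    (h : readback t = .app M N) : ∃ u v, t = .app u v ∧ readback u = M ∧ readback v = N := by
  cases t with
  | var => cases hcl
  | app u v => exact ⟨u, v, rfl, by simpa [readback] using h⟩
  | con => simp [readback_con] at h

theorem eq_con_of_readback_eq_lam {u : PTerm} {x : ℕ} {B : Lam} (hcan : Canonical u)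
    (h : readback u = lam x B) : ∃ M ts, u = con x M ts ∧ ∀ s ∈ ts, IsConTerm s := by
  cases hcan with
  | con hcon =>
    cases hcon with
    | @con x' M ts hts =>
      obtain ⟨rfl, -⟩ := lam.inj (by simpa [readback_con] using h)
      exact ⟨M, ts, rfl, hts⟩
  | app => simp [readback] at h

end PTerm

theorem exists_phiStep_of_readback_eq_lam {u v : PTerm} {x : ℕ} {B : Lam} (hwf : WF u)
    (hcl : ClosedP u) (hcan : Canonical u) (hcanv : Canonical v) (hu : readback u = lam x B)
    (hv : IsValue (readback v)) :
    ∃ w, PhiStep (app u v) w ∧ readback w = subst B x (readback v) := by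
  obtain ⟨M, ts, rfl, hts⟩ := eq_con_of_readback_eq_lam hcan hu
  cases hwf with | con hlen hwfts =>
  cases hcl with | con hclts =>
  rw [readback_con, lam.injEq] at hu
  obtain ⟨-, rfl⟩ := hu
  exact ⟨_, .root hts (.of_canonical_of_isValue hcanv hv) hlen,
    readback_contractum v hlen fun s hs => fv_readback_eq_empty (hwfts s hs) (hclts s hs)⟩

/-- If M →v N, t is canonical and ⟦t⟧ = M, then t rewrites in one step in Φ to
some u with ⟦u⟧ = N. -/
theorem cbvStep_lift (M N : Lam) (t : PTerm) (hwf : PTerm.WF t)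
    (hcl : PTerm.ClosedP t) (hcan : PTerm.Canonical t)
    (hstep : Lam.CbvStep M N) (hrb : readback t = M) :
    ∃ u : PTerm, PhiStep t u ∧ readback u = N := by
  induction hstep generalizing t with
  | beta hV =>
    obtain ⟨u, v, rfl, hu, rfl⟩ := eq_app_of_readback_eq_app hcl hrb
    cases hwf with | app hwfu _ =>
    cases hcl with | app hclu _ =>
    obtain ⟨hcanu, hcanv⟩ := Canonical.app_iff.1 hcan
    exact exists_phiStep_of_readback_eq_lam hwfu hclu hcanu hcanv hu hV
  | appL _ ih =>
    obtain ⟨u, v, rfl, rfl, rfl⟩ := eq_app_of_readback_eq_app hcl hrb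
    cases hwf with | app hwfu _ =>
    cases hcl with | app hclu _ =>
    obtain ⟨u', hstep, rfl⟩ := ih u hwfu hclu (Canonical.app_iff.1 hcan).1 rfl
    exact ⟨.app u' v, .appL hstep, by rw [readback]⟩
  | appR _ ih =>
    obtain ⟨u, v, rfl, rfl, rfl⟩ := eq_app_of_readback_eq_app hcl hrb
    cases hwf with | app _ hwfv =>
    cases hcl with | app _ hclv =>
    obtain ⟨v', hstep, rfl⟩ := ih v hwfv hclv (Canonical.app_iff.1 hcan).2 rfl
    exact ⟨.app u v', .appR hstep, by rw [readback]⟩
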